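/- Let K ∈ ℝ^{G×G} be symmetric positive definite and let A, Â ∈ ℝ^G be centered vectors (entries summing to zero) with ‖A‖₂² = ‖Â‖₂² = G, and let d = ‖A − Â‖₂ > 0. Let κ be the ratio of the maximum to minimum of the Rayleigh quotient of K restricted to the centered subspace H = {w : 1ᵀw = 0}. Then cos θ := (AᵀKÂ)/(√(AᵀKA)·√(ÂᵀKÂ)) satisfies cos θ ≤ 1 − 2 / (4κ·G/d² − (κ−1)). -/

import Mathlib

/-!
Write `s = A + Â` and `u = A - Â`. Both are centered, and `s ⬝ᵥ u = 0` because `‖A‖ = ‖Â‖`;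
moreover `‖s‖² + ‖u‖² = 4G` and `‖u‖² = d²`. With `p = sᵀKs`, `q = uᵀKu`, `r = sᵀKu`, the
`K`-cosine of `A, Â` equals `(p - q) / √((p + q)² - 4r²)`. On the centered subspace the Rayleigh
bounds give `p ≤ λ_max ‖s‖²` and `q ≥ λ_min ‖u‖²`, and Cauchy–Schwarz for the positive
semidefinite form `K - λ_min` gives `r² ≤ (p - λ_min ‖s‖²)(q - λ_min ‖u‖²)`. These three facts
bound the cosine by
`(λ_max ‖s‖² - λ_min ‖u‖²) / (λ_max ‖s‖² + λ_min ‖u‖²)`, which is the claimed bound rewritten.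
-/

open Matrix

def centeredSubspace (ι : Type*) [Fintype ι] : Submodule ℝ (ι → ℝ) where
  carrier := {w | ∑ i, w i = 0}
  add_mem' {v w} hv hw := by simp_all [Finset.sum_add_distrib]
  zero_mem' := by simp
  smul_mem' c w hw := by simp_all [← Finset.mul_sum]

variable {ι : Type*} [Fintype ι]

lemma dotProduct_self_nonneg (v : ι → ℝ) : 0 ≤ v ⬝ᵥ v :=
  Finset.sum_nonneg fun i _ => mul_self_nonneg (v i)

lemma dotProduct_self_pos {v : ι → ℝ} (hv : v ≠ 0) : 0 < v ⬝ᵥ v :=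
  (dotProduct_self_nonneg v).lt_of_ne' (dotProduct_self_eq_zero.not.mpr hv)

def rayleighQuotients (K : Matrix ι ι ℝ) (V : Submodule ℝ (ι → ℝ)) : Set ℝ :=
  {r | ∃ w : ι → ℝ, w ≠ 0 ∧ w ∈ V ∧ r = (w ⬝ᵥ K *ᵥ w) / (w ⬝ᵥ w)}

namespace rayleighQuotients

variable {K : Matrix ι ι ℝ} {V : Submodule ℝ (ι → ℝ)} {w : ι → ℝ}

lemma pos_of_posDef (hK : K.PosDef) {r : ℝ} (hr : r ∈ rayleighQuotients K V) : 0 < r := by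
  obtain ⟨w, hw, -, rfl⟩ := hr
  exact div_pos (by simpa using hK.dotProduct_mulVec_pos hw) (dotProduct_self_pos hw)

lemma mul_le_of_mem_lowerBounds {l : ℝ} (hl : l ∈ lowerBounds (rayleighQuotients K V))
    (hw : w ∈ V) : l * (w ⬝ᵥ w) ≤ w ⬝ᵥ K *ᵥ w := by
  rcases eq_or_ne w 0 with rfl | hw0
  · simp
  · exact (le_div_iff₀ (dotProduct_self_pos hw0)).mp (hl ⟨w, hw0, hw, rfl⟩)

lemma le_mul_of_mem_upperBounds {L : ℝ} (hL : L ∈ upperBounds (rayleighQuotients K V))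
    (hw : w ∈ V) : w ⬝ᵥ K *ᵥ w ≤ L * (w ⬝ᵥ w) := by
  rcases eq_or_ne w 0 with rfl | hw0
  · simp
  · exact (div_le_iff₀ (dotProduct_self_pos hw0)).mp (hL ⟨w, hw0, hw, rfl⟩)

end rayleighQuotients

lemma add_dotProduct_sub_eq_zero {v w : ι → ℝ} (h : v ⬝ᵥ v = w ⬝ᵥ w) :
    (v + w) ⬝ᵥ (v - w) = 0 := by
  rw [add_dotProduct, dotProduct_sub, dotProduct_sub, dotProduct_comm w v, h]
  ring

lemma add_dotProduct_add_add_sub_dotProduct_sub (v w : ι → ℝ) :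
    (v + w) ⬝ᵥ (v + w) + (v - w) ⬝ᵥ (v - w) = 2 * (v ⬝ᵥ v + w ⬝ᵥ w) := by
  simp only [add_dotProduct, sub_dotProduct, dotProduct_add, dotProduct_sub, dotProduct_comm w v]
  ring

lemma Matrix.IsSymm.dotProduct_mulVec_comm {K : Matrix ι ι ℝ} (hK : K.IsSymm) (v w : ι → ℝ) :
    v ⬝ᵥ K *ᵥ w = w ⬝ᵥ K *ᵥ v := by
  rw [dotProduct_mulVec, ← mulVec_transpose, hK, dotProduct_comm]

/-- Cauchy–Schwarz for the form `K - l`, which is positive semidefinite on `V`. -/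
lemma sq_dotProduct_mulVec_sub_le {K : Matrix ι ι ℝ} (hK : K.IsSymm) {V : Submodule ℝ (ι → ℝ)}
    {l : ℝ} (hl : ∀ w ∈ V, l * (w ⬝ᵥ w) ≤ w ⬝ᵥ K *ᵥ w) {v w : ι → ℝ} (hv : v ∈ V) (hw : w ∈ V) :
    (v ⬝ᵥ K *ᵥ w - l * (v ⬝ᵥ w)) ^ 2 ≤
      (v ⬝ᵥ K *ᵥ v - l * (v ⬝ᵥ v)) * (w ⬝ᵥ K *ᵥ w - l * (w ⬝ᵥ w)) := by
  have hquad : ∀ t : ℝ, 0 ≤ (v ⬝ᵥ K *ᵥ v - l * (v ⬝ᵥ v)) * (t * t) +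
      2 * (v ⬝ᵥ K *ᵥ w - l * (v ⬝ᵥ w)) * t + (w ⬝ᵥ K *ᵥ w - l * (w ⬝ᵥ w)) := by
    intro t
    have h := hl (t • v + w) (V.add_mem (V.smul_mem t hv) hw)
    simp only [mulVec_add, mulVec_smul, add_dotProduct, dotProduct_add, smul_dotProduct,
      dotProduct_smul, smul_eq_mul, hK.dotProduct_mulVec_comm w v, dotProduct_comm w v] at h
    linarith
  have := discrim_le_zero hquad
  rw [discrim] at this
  linarith

lemma dotProduct_mulVec_div_sqrt_mul_sqrt_eq {K : Matrix ι ι ℝ} (hK : K.IsSymm) {v w : ι → ℝ}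
    (hv : 0 ≤ v ⬝ᵥ K *ᵥ v) (hw : 0 ≤ w ⬝ᵥ K *ᵥ w) :
    v ⬝ᵥ K *ᵥ w / (√(v ⬝ᵥ K *ᵥ v) * √(w ⬝ᵥ K *ᵥ w)) =
      ((v + w) ⬝ᵥ K *ᵥ (v + w) - (v - w) ⬝ᵥ K *ᵥ (v - w)) /
        √(((v + w) ⬝ᵥ K *ᵥ (v + w) + (v - w) ⬝ᵥ K *ᵥ (v - w)) ^ 2
          - 4 * ((v + w) ⬝ᵥ K *ᵥ (v - w)) ^ 2) := by
  have hp : (v + w) ⬝ᵥ K *ᵥ (v + w) = v ⬝ᵥ K *ᵥ v + w ⬝ᵥ K *ᵥ w + 2 * (v ⬝ᵥ K *ᵥ w) := by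
    simp only [mulVec_add, add_dotProduct, dotProduct_add, hK.dotProduct_mulVec_comm w v]
    ring
  have hq : (v - w) ⬝ᵥ K *ᵥ (v - w) = v ⬝ᵥ K *ᵥ v + w ⬝ᵥ K *ᵥ w - 2 * (v ⬝ᵥ K *ᵥ w) := by
    simp only [mulVec_sub, sub_dotProduct, dotProduct_sub, hK.dotProduct_mulVec_comm w v]
    ring
  have hr : (v + w) ⬝ᵥ K *ᵥ (v - w) = v ⬝ᵥ K *ᵥ v - w ⬝ᵥ K *ᵥ w := by
    simp only [mulVec_sub, add_dotProduct, dotProduct_sub, hK.dotProduct_mulVec_comm w v]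
    ring
  have hE : (2 * (v ⬝ᵥ K *ᵥ v + w ⬝ᵥ K *ᵥ w)) ^ 2 - 4 * (v ⬝ᵥ K *ᵥ v - w ⬝ᵥ K *ᵥ w) ^ 2
      = (4 * (√(v ⬝ᵥ K *ᵥ v) * √(w ⬝ᵥ K *ᵥ w))) ^ 2 := by
    simp only [mul_pow, Real.sq_sqrt hv, Real.sq_sqrt hw]
    ring
  rw [hp, hq, hr, add_add_sub_cancel, add_sub_sub_cancel, ← two_mul, ← two_mul, hE,
    Real.sqrt_sq (by positivity)]
  ring

lemma sub_div_sqrt_le_sub_div_add {p q r x y z : ℝ} (hp : 0 ≤ p) (hpx : p ≤ x) (hy : 0 < y)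
    (hyq : y ≤ q) (hz : 0 ≤ z) (hr : r ^ 2 ≤ (p - z) * (q - y)) :
    (p - q) / √((p + q) ^ 2 - 4 * r ^ 2) ≤ (x - y) / (x + y) := by
  replace hr : r ^ 2 ≤ p * (q - y) :=
    hr.trans (mul_le_mul_of_nonneg_right (sub_le_self p hz) (sub_nonneg.mpr hyq))
  have hE : (p - q) ^ 2 + 4 * p * y ≤ (p + q) ^ 2 - 4 * r ^ 2 := by nlinarith
  have hEpos : 0 < (p + q) ^ 2 - 4 * r ^ 2 := by
    rcases hp.eq_or_lt with rfl | hp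
    · nlinarith
    · nlinarith [mul_pos hp hy]
  rcases le_or_gt p q with hpq | hqp
  · calc (p - q) / √((p + q) ^ 2 - 4 * r ^ 2) ≤ (p - q) / (p + q) := by
          rw [div_le_div_iff₀ (Real.sqrt_pos.mpr hEpos) (by linarith)]
          refine mul_le_mul_of_nonpos_left ?_ (by linarith)
          exact (Real.sqrt_le_left (by linarith)).mpr (by nlinarith)
      _ ≤ (x - y) / (x + y) := by
          rw [div_le_div_iff₀ (by linarith) (by linarith)]
          nlinarith
  · -- `D ↦ D / √(D² + 4py)` is increasing, and `D = p - q ≤ p - y`.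
    calc (p - q) / √((p + q) ^ 2 - 4 * r ^ 2) ≤ (p - y) / (p + y) := by
          rw [div_le_div_iff₀ (Real.sqrt_pos.mpr hEpos) (by linarith)]
          refine le_of_pow_le_pow_left₀ two_ne_zero
            (mul_nonneg (by linarith) (Real.sqrt_nonneg _)) ?_
          rw [mul_pow, mul_pow, Real.sq_sqrt hEpos.le]
          have : (p - q) ^ 2 ≤ (p - y) ^ 2 := pow_le_pow_left₀ (by linarith) (by linarith) 2
          nlinarith [mul_le_mul_of_nonneg_left hE (sq_nonneg (p - y)),
            mul_le_mul_of_nonneg_left this (by positivity : 0 ≤ 4 * p * y)]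
      _ ≤ (x - y) / (x + y) := by
          rw [div_le_div_iff₀ (by linarith) (by linarith)]
          nlinarith

lemma one_sub_two_div_eq {L l α β G d : ℝ} (hl : 0 < l) (hβ : 0 < β) (hS : 0 < L * α + l * β)
    (hG : 4 * G = α + β) (hd : d ^ 2 = β) :
    1 - 2 / (4 * (L / l) * G / d ^ 2 - (L / l - 1)) = (L * α - l * β) / (L * α + l * β) := by
  have hden : 4 * (L / l) * G / d ^ 2 - (L / l - 1) = (L * α + l * β) / (l * β) := by
    rw [hd, show 4 * (L / l) * G = L / l * (4 * G) by ring, hG]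
    field_simp
    ring
  rw [hden]
  field_simp
  ring

theorem stmt_6_general (G : ℕ) (K : Matrix (Fin G) (Fin G) ℝ)
    (hKsymm : K.IsSymm) (hKpd : K.PosDef)
    (A Ahat : Fin G → ℝ)
    (hAc : ∑ i, A i = 0) (hAhatc : ∑ i, Ahat i = 0)
    (hAn : A ⬝ᵥ A = (G : ℝ)) (hAhatn : Ahat ⬝ᵥ Ahat = (G : ℝ))
    (d : ℝ) (hd : d = Real.sqrt ((A - Ahat) ⬝ᵥ (A - Ahat))) (hdpos : 0 < d)
    (lmax lmin : ℝ)
    (hmax : IsGreatest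
      {r : ℝ | ∃ w : Fin G → ℝ, w ≠ 0 ∧ (∑ i, w i = 0) ∧
        r = (w ⬝ᵥ K.mulVec w) / (w ⬝ᵥ w)} lmax)
    (hmin : IsLeast
      {r : ℝ | ∃ w : Fin G → ℝ, w ≠ 0 ∧ (∑ i, w i = 0) ∧
        r = (w ⬝ᵥ K.mulVec w) / (w ⬝ᵥ w)} lmin)
    (κ : ℝ) (hκ : κ = lmax / lmin) :
    (A ⬝ᵥ K.mulVec Ahat) /
      (Real.sqrt (A ⬝ᵥ K.mulVec A) * Real.sqrt (Ahat ⬝ᵥ K.mulVec Ahat)) ≤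
      1 - 2 / (4 * κ * (G : ℝ) / d ^ 2 - (κ - 1)) := by
  have hKnonneg : ∀ v, 0 ≤ v ⬝ᵥ K *ᵥ v := fun v => by
    simpa using hKpd.posSemidef.dotProduct_mulVec_nonneg v
  have hlmin : 0 < lmin :=
    rayleighQuotients.pos_of_posDef (V := centeredSubspace (Fin G)) hKpd hmin.1
  have hlmax : 0 ≤ lmax := hlmin.le.trans (hmin.2 hmax.1)
  have hlow : ∀ w ∈ centeredSubspace (Fin G), lmin * (w ⬝ᵥ w) ≤ w ⬝ᵥ K *ᵥ w :=
    fun w => rayleighQuotients.mul_le_of_mem_lowerBounds hmin.2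
  have hs : A + Ahat ∈ centeredSubspace (Fin G) := (centeredSubspace (Fin G)).add_mem hAc hAhatc
  have hu : A - Ahat ∈ centeredSubspace (Fin G) := (centeredSubspace (Fin G)).sub_mem hAc hAhatc
  have hsum : 4 * (G : ℝ) = (A + Ahat) ⬝ᵥ (A + Ahat) + (A - Ahat) ⬝ᵥ (A - Ahat) := by
    rw [add_dotProduct_add_add_sub_dotProduct_sub, hAn, hAhatn]
    ring
  have hd2 : d ^ 2 = (A - Ahat) ⬝ᵥ (A - Ahat) := by
    rw [hd, Real.sq_sqrt (dotProduct_self_nonneg _)]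
  have hα : 0 ≤ (A + Ahat) ⬝ᵥ (A + Ahat) := dotProduct_self_nonneg _
  have hβ : 0 < (A - Ahat) ⬝ᵥ (A - Ahat) := hd2 ▸ pow_pos hdpos 2
  have hcs := sq_dotProduct_mulVec_sub_le hKsymm hlow hs hu
  rw [add_dotProduct_sub_eq_zero (hAn.trans hAhatn.symm), mul_zero, sub_zero] at hcs
  rw [dotProduct_mulVec_div_sqrt_mul_sqrt_eq hKsymm (hKnonneg A) (hKnonneg Ahat), hκ,
    one_sub_two_div_eq hlmin hβ
      (add_pos_of_nonneg_of_pos (mul_nonneg hlmax hα) (mul_pos hlmin hβ)) hsum hd2]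
  exact sub_div_sqrt_le_sub_div_add (hKnonneg _)
    (rayleighQuotients.le_mul_of_mem_upperBounds (V := centeredSubspace (Fin G)) hmax.2 hs)
    (mul_pos hlmin hβ) (hlow _ hu) (mul_nonneg hlmin.le hα) hcs

/-- CAG upper-bounds gradient alignment: the `K`-weighted cosine of the advantage
vectors `A, Â` is at most `1 - 2 / (4κG/d² - (κ-1))` where `d` is the CAG score. -/
theorem stmt_6 (G : ℕ) (hG : 2 ≤ G) (K : Matrix (Fin G) (Fin G) ℝ)
    (hKsymm : K.IsSymm) (hKpd : K.PosDef)
    (A Ahat : Fin G → ℝ)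
    (hAc : ∑ i, A i = 0) (hAhatc : ∑ i, Ahat i = 0)
    (hAn : A ⬝ᵥ A = (G : ℝ)) (hAhatn : Ahat ⬝ᵥ Ahat = (G : ℝ))
    (d : ℝ) (hd : d = Real.sqrt ((A - Ahat) ⬝ᵥ (A - Ahat))) (hdpos : 0 < d)
    (lmax lmin : ℝ)
    (hmax : IsGreatest
      {r : ℝ | ∃ w : Fin G → ℝ, w ≠ 0 ∧ (∑ i, w i = 0) ∧
        r = (w ⬝ᵥ K.mulVec w) / (w ⬝ᵥ w)} lmax)
    (hmin : IsLeast
      {r : ℝ | ∃ w : Fin G → ℝ, w ≠ 0 ∧ (∑ i, w i = 0) ∧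
        r = (w ⬝ᵥ K.mulVec w) / (w ⬝ᵥ w)} lmin)
    (κ : ℝ) (hκ : κ = lmax / lmin) :
    (A ⬝ᵥ K.mulVec Ahat) /
      (Real.sqrt (A ⬝ᵥ K.mulVec A) * Real.sqrt (Ahat ⬝ᵥ K.mulVec Ahat)) ≤
      1 - 2 / (4 * κ * (G : ℝ) / d ^ 2 - (κ - 1)) :=
  stmt_6_general G K hKsymm hKpd A Ahat hAc hAhatc hAn hAhatn d hd hdpos lmax lmin hmax hmin κ hκ
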